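/- Let 1 ≤ x ≤ ℓ ≤ 2/√3. Then −(ℓ²/2)·arccos(x/ℓ) + (x/2)·√(ℓ² − x²) + (3/2 − x)·(ℓ²·arccos(1/ℓ) − √(ℓ² − 1)) ≥ 0. Moreover, for every 1 < ℓ ≤ 2/√3, the quantity ℓ²·arccos(1/ℓ) − √(ℓ² − 1) is positive and equals one sixth of the area of ℓB² ∖ H, where H is the regular hexagon of inradius 1 centered at the origin in E². -/

import Mathlib

/-!
Fix `ℓ` and let `S(d) = ℓ² arccos(d/ℓ) - d √(ℓ² - d²)` be the area of the part of `ℓB²` beyond a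
chord at distance `d` from the centre. Since `S'(d) = -2 √(ℓ² - d²)`, `S` is convex on `[0, ℓ]`
with `S(ℓ) = 0`, so `S(x) ≤ (ℓ - x)/(ℓ - 1) · S(1) ≤ (3 - 2x) S(1)` for `1 < x ≤ ℓ ≤ 3/2`, and
the left-hand side of the inequality is `-S(x)/2 + (3/2 - x) S(1)`.

For the area, identify `E²` with `ℂ`. There `H` is the intersection of the six half-planes
`⟪n_k, z⟫ ≤ 1` whose unit normals `n_k` are `60°` apart, so `ℓB² \ H` is the union of six such
segments at distance `1`, all congruent to each other by reflections. They are pairwise disjoint: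
a point in two of them would give `2 < ⟪n_j + n_k, z⟫ ≤ √3 ℓ ≤ 2`.
-/

open MeasureTheory Metric

/-- The regular hexagon centered at the origin circumscribed about the unit disk `B²`
(inradius `1`, circumradius `2/√3`): the convex hull of its six vertices. -/
noncomputable def regularHexagon : Set (EuclideanSpace ℝ (Fin 2)) :=
  convexHull ℝ (Set.range fun k : Fin 6 =>
    (WithLp.equiv 2 (Fin 2 → ℝ)).symm
      ![2 / Real.sqrt 3 * Real.cos ((k : ℝ) * (Real.pi / 3)),
        2 / Real.sqrt 3 * Real.sin ((k : ℝ) * (Real.pi / 3))])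

open Real Set ComplexConjugate

noncomputable def segmentArea (r d : ℝ) : ℝ := r ^ 2 * arccos (d / r) - d * √(r ^ 2 - d ^ 2)

lemma segmentArea_one (r : ℝ) : segmentArea r 1 = r ^ 2 * arccos (1 / r) - √(r ^ 2 - 1) := by
  simp [segmentArea]

lemma segmentArea_self (r : ℝ) : segmentArea r r = 0 := by
  rcases eq_or_ne r 0 with rfl | hr
  · simp [segmentArea]
  · simp [segmentArea, div_self hr]

lemma hasDerivAt_segmentArea {r d : ℝ} (hd : d ∈ Ioo (-r) r) :
    HasDerivAt (segmentArea r) (-2 * √(r ^ 2 - d ^ 2)) d := by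
  obtain ⟨hd₁, hd₂⟩ := hd
  have hr : 0 < r := by linarith
  have hpos : 0 < r ^ 2 - d ^ 2 := by nlinarith
  have harccos : HasDerivAt (fun t => arccos (t / r)) (-(1 / √(1 - (d / r) ^ 2)) * (1 / r)) d :=
    (hasDerivAt_arccos (by rw [ne_eq, div_eq_iff hr.ne']; linarith)
      (by rw [ne_eq, div_eq_iff hr.ne']; linarith)).comp d ((hasDerivAt_id d).div_const r)
  have hsqrt : HasDerivAt (fun t => √(r ^ 2 - t ^ 2)) (-(2 * d) / (2 * √(r ^ 2 - d ^ 2))) d := by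
    simpa using ((hasDerivAt_pow 2 d).const_sub (r ^ 2)).sqrt hpos.ne'
  have hs : √(1 - (d / r) ^ 2) = √(r ^ 2 - d ^ 2) / r := by
    rw [show 1 - (d / r) ^ 2 = (r ^ 2 - d ^ 2) / r ^ 2 by field_simp, sqrt_div' _ (sq_nonneg r),
      sqrt_sq hr.le]
  have hsq := sq_sqrt hpos.le
  have hne : √(r ^ 2 - d ^ 2) ≠ 0 := (sqrt_pos.2 hpos).ne'
  refine ((harccos.const_mul (r ^ 2)).sub ((hasDerivAt_id d).mul hsqrt)).congr_deriv ?_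
  rw [hs]
  field_simp
  simp only [id]
  linear_combination hsq

lemma continuousOn_segmentArea (r : ℝ) : ContinuousOn (segmentArea r) (Icc (-r) r) := by
  unfold segmentArea
  fun_prop

lemma integral_two_mul_sqrt_sq_sub_sq {r d : ℝ} (hd : d ∈ Icc (-r) r) :
    ∫ x in d..r, 2 * √(r ^ 2 - x ^ 2) = segmentArea r d := by
  have := intervalIntegral.integral_eq_sub_of_hasDerivAt_of_le hd.2
    ((continuousOn_segmentArea r).mono (Icc_subset_Icc_left hd.1))
    (fun x hx => hasDerivAt_segmentArea (Ioo_subset_Ioo_left hd.1 hx))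
    ((by fun_prop : Continuous fun x => -2 * √(r ^ 2 - x ^ 2)).intervalIntegrable _ _)
  rw [segmentArea_self] at this
  simp only [neg_mul, intervalIntegral.integral_neg] at this
  linarith

lemma segmentArea_pos {r d : ℝ} (hd : d ∈ Ico (-r) r) : 0 < segmentArea r d := by
  rw [← integral_two_mul_sqrt_sq_sub_sq (Ico_subset_Icc_self hd)]
  refine intervalIntegral.intervalIntegral_pos_of_pos_on
    ((by fun_prop : Continuous fun x => 2 * √(r ^ 2 - x ^ 2)).intervalIntegrable _ _)
    (fun x hx => ?_) hd.2
  have : 0 < r ^ 2 - x ^ 2 := by nlinarith [hx.1, hx.2, hd.1]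
  positivity

lemma convexOn_segmentArea (r : ℝ) : ConvexOn ℝ (Icc 0 r) (segmentArea r) := by
  have hIoo : ∀ x ∈ Ioo 0 r, x ∈ Ioo (-r) r := fun x hx => ⟨by linarith [hx.1, hx.2], hx.2⟩
  refine MonotoneOn.convexOn_of_deriv (convex_Icc 0 r)
    ((continuousOn_segmentArea r).mono fun x hx => ⟨by linarith [hx.1, hx.2], hx.2⟩) ?_ ?_
  · rw [interior_Icc]
    exact fun x hx => (hasDerivAt_segmentArea (hIoo x hx)).differentiableAt.differentiableWithinAt
  · rw [interior_Icc]
    intro x hx y hy hxy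
    rw [(hasDerivAt_segmentArea (hIoo x hx)).deriv, (hasDerivAt_segmentArea (hIoo y hy)).deriv]
    have := sqrt_le_sqrt (show r ^ 2 - y ^ 2 ≤ r ^ 2 - x ^ 2 by nlinarith [hx.1])
    linarith

lemma sub_mul_segmentArea_le {r d x : ℝ} (hd : 0 ≤ d) (hdx : d ≤ x) (hxr : x ≤ r) :
    (r - d) * segmentArea r x ≤ (r - x) * segmentArea r d := by
  rcases hdx.trans hxr |>.eq_or_lt with rfl | hdr
  · obtain rfl : x = d := le_antisymm hxr hdx
    simp
  have hrd : r - d ≠ 0 := (sub_pos.2 hdr).ne'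
  have hconv := (convexOn_segmentArea r).2 (⟨hd, hdr.le⟩ : d ∈ Icc 0 r)
    (⟨hd.trans hdr.le, le_rfl⟩ : r ∈ Icc 0 r) (div_nonneg (sub_nonneg.2 hxr) (sub_pos.2 hdr).le)
    (div_nonneg (sub_nonneg.2 hdx) (sub_pos.2 hdr).le) (by field_simp; ring)
  have hx : ((r - x) / (r - d)) • d + ((x - d) / (r - d)) • r = x := by
    simp only [smul_eq_mul]; field_simp; ring
  rw [hx, segmentArea_self, smul_eq_mul, smul_eq_mul, mul_zero, add_zero] at hconv
  calc (r - d) * segmentArea r x ≤ (r - d) * ((r - x) / (r - d) * segmentArea r d) :=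
        mul_le_mul_of_nonneg_left hconv (by linarith)
    _ = (r - x) * segmentArea r d := by field_simp

lemma segmentArea_le_three_sub_two_mul {r x : ℝ} (hx : 1 ≤ x) (hxr : x ≤ r) (hr : r ≤ 3 / 2) :
    segmentArea r x ≤ (3 - 2 * x) * segmentArea r 1 := by
  rcases hx.eq_or_lt with rfl | hx
  · norm_num
  have hr1 : 1 < r := hx.trans_le hxr
  have hchord := sub_mul_segmentArea_le zero_le_one hx.le hxr
  have hpos := segmentArea_pos (d := 1) ⟨by linarith, hr1⟩
  have hweight : r - x ≤ (3 - 2 * x) * (r - 1) := by nlinarith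
  refine le_of_mul_le_mul_left ?_ (sub_pos.2 hr1)
  calc (r - 1) * segmentArea r x ≤ (r - x) * segmentArea r 1 := hchord
    _ ≤ (3 - 2 * x) * (r - 1) * segmentArea r 1 := mul_le_mul_of_nonneg_right hweight hpos.le
    _ = (r - 1) * ((3 - 2 * x) * segmentArea r 1) := by ring

section BallCap

variable {E : Type*} [NormedAddCommGroup E] [InnerProductSpace ℝ E]

def ballCap (r d : ℝ) (u : E) : Set E := {x | ‖x‖ ≤ r ∧ d < inner ℝ u x}

lemma measurableSet_ballCap [MeasurableSpace E] [OpensMeasurableSpace E] (r d : ℝ) (u : E) :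
    MeasurableSet (ballCap r d u) :=
  show MeasurableSet ({x : E | ‖x‖ ≤ r} ∩ {x | d < inner ℝ u x}) from
    (isClosed_le continuous_norm continuous_const).measurableSet.inter
      (isOpen_lt continuous_const (continuous_const.inner continuous_id)).measurableSet

lemma disjoint_ballCap {r d : ℝ} {u v : E} (h : ‖u + v‖ * r ≤ 2 * d) :
    Disjoint (ballCap r d u) (ballCap r d v) := by
  refine Set.disjoint_left.2 fun x ⟨hxr, hu⟩ ⟨_, hv⟩ => ?_
  have := real_inner_le_norm (u + v) x
  rw [inner_add_left] at this
  nlinarith [mul_le_mul_of_nonneg_left hxr (norm_nonneg (u + v))]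

lemma volume_ballCap_congr [FiniteDimensional ℝ E] [MeasurableSpace E] [BorelSpace E]
    (r d : ℝ) {u v : E} (h : ‖u‖ = ‖v‖) : volume (ballCap r d u) = volume (ballCap r d v) := by
  set R := Submodule.reflection (ℝ ∙ (u - v))ᗮ
  have hpre : R ⁻¹' ballCap r d v = ballCap r d u := by
    ext x
    simp only [ballCap, mem_preimage, mem_ofPred_eq]
    rw [← Submodule.reflection_sub h, LinearIsometryEquiv.inner_map_map,
      LinearIsometryEquiv.norm_map]
  rw [← hpre, R.measurePreserving.measure_preimage (measurableSet_ballCap r d v).nullMeasurableSet]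

end BallCap

-- When `r ^ 2 < x ^ 2` both sides are `0`, since `√` vanishes on negative numbers.
lemma volume_setOf_sq_add_sq_le (x r : ℝ) :
    volume {y : ℝ | x ^ 2 + y ^ 2 ≤ r ^ 2} = ENNReal.ofReal (2 * √(r ^ 2 - x ^ 2)) := by
  rcases le_or_gt 0 (r ^ 2 - x ^ 2) with h | h
  · have : {y : ℝ | x ^ 2 + y ^ 2 ≤ r ^ 2} = Icc (-√(r ^ 2 - x ^ 2)) √(r ^ 2 - x ^ 2) := by
      ext y
      rw [mem_ofPred_eq, mem_Icc, ← abs_le, ← sqrt_sq_eq_abs, sqrt_le_sqrt_iff h]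
      constructor <;> intro <;> linarith
    rw [this, volume_Icc]
    ring_nf
  · have : {y : ℝ | x ^ 2 + y ^ 2 ≤ r ^ 2} = ∅ :=
      eq_empty_of_forall_notMem fun y hy => by nlinarith [sq_nonneg y, hy.out]
    simp [this, sqrt_eq_zero'.2 h.le]

lemma volume_ballCap_one {r d : ℝ} (hd : d ∈ Icc (-r) r) :
    volume (ballCap r d (1 : ℂ)) = ENNReal.ofReal (segmentArea r d) := by
  have hr : 0 ≤ r := by linarith [hd.1, hd.2]
  set S := {p : ℝ × ℝ | d < p.1 ∧ p.1 ^ 2 + p.2 ^ 2 ≤ r ^ 2}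
  have hS : MeasurableSet S := (measurableSet_lt measurable_const measurable_fst).inter
    (measurableSet_le (by fun_prop : Measurable fun p : ℝ × ℝ => p.1 ^ 2 + p.2 ^ 2)
      measurable_const)
  have hcap : ballCap r d (1 : ℂ) = Complex.measurableEquivRealProd ⁻¹' S := by
    ext z
    simp [ballCap, S, Complex.inner, ← sq_le_sq₀ (norm_nonneg z) hr, Complex.sq_norm,
      Complex.normSq_apply, ← sq, and_comm]
  have hslice : ∀ x, volume (Prod.mk x ⁻¹' S) =
      (Ioc d r).indicator (fun x => ENNReal.ofReal (2 * √(r ^ 2 - x ^ 2))) x := by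
    intro x
    by_cases hx : d < x
    · have : Prod.mk x ⁻¹' S = {y | x ^ 2 + y ^ 2 ≤ r ^ 2} := by ext y; simp [S, hx]
      rw [this, volume_setOf_sq_add_sq_le]
      by_cases hxr : x ≤ r
      · rw [indicator_of_mem (show x ∈ Ioc d r from ⟨hx, hxr⟩)]
      · rw [indicator_of_notMem fun h => hxr h.2, sqrt_eq_zero'.2 (by nlinarith), mul_zero,
          ENNReal.ofReal_zero]
    · have : Prod.mk x ⁻¹' S = ∅ := by ext y; simp [S, hx]
      rw [this, measure_empty, indicator_of_notMem fun h => hx h.1]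
  have hf : Continuous fun x => 2 * √(r ^ 2 - x ^ 2) := by fun_prop
  rw [hcap, Complex.volume_preserving_equiv_real_prod.measure_preimage hS.nullMeasurableSet,
    Measure.volume_eq_prod, Measure.prod_apply hS]
  simp_rw [hslice]
  rw [lintegral_indicator measurableSet_Ioc, ← ofReal_integral_eq_lintegral_ofReal
    hf.integrableOn_Ioc (Filter.Eventually.of_forall fun x => by positivity),
    ← intervalIntegral.integral_of_le hd.2, integral_two_mul_sqrt_sq_sub_sq hd]

lemma sqrt_three_sq : √3 ^ 2 = 3 := sq_sqrt (by norm_num)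

lemma two_div_sqrt_three_mul_sqrt_three : 2 / √3 * √3 = 2 := by field_simp

/-- `ω = e^{iπ/3}`. The vertices of `H` are `(2/√3) ω^k`, its edge normals `e^{iπ/6} ω^k`. -/
noncomputable def sixthRoot : ℂ := ⟨1 / 2, √3 / 2⟩

local notation "ω" => sixthRoot

@[simp] lemma sixthRoot_re : sixthRoot.re = 1 / 2 := rfl

@[simp] lemma sixthRoot_im : sixthRoot.im = √3 / 2 := rfl

lemma sixthRoot_sq : ω ^ 2 = ω - 1 := by
  apply Complex.ext <;> simp [sq] <;> nlinarith [sqrt_three_sq]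

lemma sixthRoot_pow_three : ω ^ 3 = -1 := by
  rw [pow_succ, sixthRoot_sq]
  linear_combination sixthRoot_sq

lemma sixthRoot_pow_four : ω ^ 4 = -ω := by rw [pow_succ, sixthRoot_pow_three]; ring

lemma sixthRoot_pow_five : ω ^ 5 = 1 - ω := by
  rw [pow_succ, sixthRoot_pow_four, neg_mul, ← sq, sixthRoot_sq]; ring

lemma sixthRoot_pow_six : ω ^ 6 = 1 := by
  rw [show 6 = 3 * 2 from rfl, pow_mul, sixthRoot_pow_three]; norm_num

lemma norm_sixthRoot : ‖ω‖ = 1 := by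
  rw [← sqrt_sq (norm_nonneg _), Complex.sq_norm, Complex.normSq_apply]
  simp; nlinarith [sqrt_three_sq]

lemma conj_sixthRoot : conj ω = ω ^ 5 := by
  rw [sixthRoot_pow_five]; apply Complex.ext <;> norm_num

lemma sixthRoot_pow_eq_exp (k : ℕ) : ω ^ k = Complex.exp (↑(k * (π / 3)) * Complex.I) := by
  have : ω = Complex.exp (↑(π / 3) * Complex.I) := by
    apply Complex.ext
    · rw [Complex.exp_ofReal_mul_I_re, cos_pi_div_three]; rfl
    · rw [Complex.exp_ofReal_mul_I_im, sin_pi_div_three]; rfl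
  rw [this, ← Complex.exp_nat_mul]
  push_cast; ring_nf

noncomputable def hexVertex (k : ℕ) : ℂ := ((2 / √3 : ℝ) : ℂ) * ω ^ k

noncomputable def hexNormal (k : ℕ) : ℂ := ⟨√3 / 2, 1 / 2⟩ * ω ^ k

noncomputable def complexHexagon : Set ℂ := convexHull ℝ (range hexVertex)

lemma hexVertex_re (k : ℕ) : (hexVertex k).re = 2 / √3 * cos (k * (π / 3)) := by
  rw [hexVertex, sixthRoot_pow_eq_exp, Complex.re_ofReal_mul, Complex.exp_ofReal_mul_I_re]

lemma hexVertex_im (k : ℕ) : (hexVertex k).im = 2 / √3 * sin (k * (π / 3)) := by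
  rw [hexVertex, sixthRoot_pow_eq_exp, Complex.im_ofReal_mul, Complex.exp_ofReal_mul_I_im]

lemma range_hexVertex : range (fun k : Fin 6 => hexVertex k) = range hexVertex := by
  refine (range_subset_iff.2 fun k => mem_range_self _).antisymm ?_
  rintro _ ⟨n, rfl⟩
  exact ⟨⟨n % 6, n.mod_lt (by norm_num)⟩,
    by simp [hexVertex, ← pow_eq_pow_mod n sixthRoot_pow_six]⟩

lemma conj_hexVertex (k : ℕ) : conj (hexVertex k) = hexVertex (5 * k) := by
  rw [hexVertex, hexVertex, map_mul, Complex.conj_ofReal, map_pow, conj_sixthRoot, ← pow_mul]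

lemma norm_hexNormal (k : ℕ) : ‖hexNormal k‖ = 1 := by
  rw [hexNormal, norm_mul, norm_pow, norm_sixthRoot, one_pow, mul_one, ← sqrt_sq (norm_nonneg _),
    Complex.sq_norm, Complex.normSq_apply]
  simp; nlinarith [sqrt_three_sq]

lemma norm_hexNormal_add_le {j k : Fin 6} (h : j ≠ k) : ‖hexNormal j + hexNormal k‖ ≤ √3 := by
  rw [← sqrt_sq (norm_nonneg _), Complex.sq_norm, Complex.normSq_apply]
  gcongr
  fin_cases j <;> fin_cases k <;>
    simp_all [hexNormal, sixthRoot_sq, sixthRoot_pow_three, sixthRoot_pow_four,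
      sixthRoot_pow_five] <;>
    nlinarith [sqrt_three_sq]

lemma inner_hexNormal_hexVertex_le (j k : Fin 6) :
    inner ℝ (hexNormal k) (hexVertex j) ≤ 1 := by
  fin_cases j <;> fin_cases k <;>
    simp [Complex.inner, hexNormal, hexVertex, sixthRoot_sq, sixthRoot_pow_three,
      sixthRoot_pow_four, sixthRoot_pow_five] <;>
    nlinarith [sqrt_three_sq, two_div_sqrt_three_mul_sqrt_three]

lemma conj_mem_complexHexagon {z : ℂ} (hz : z ∈ complexHexagon) : conj z ∈ complexHexagon := by
  have := mem_image_of_mem Complex.conjLIE.toLinearEquiv.toLinearMap hz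
  rw [complexHexagon, LinearMap.image_convexHull, ← range_comp] at this
  refine convexHull_mono ?_ this
  rintro _ ⟨k, rfl⟩
  exact ⟨5 * k, (conj_hexVertex k).symm⟩

/-- `z` lies on the horizontal chord of the hexagon joining its edges `[v₃, v₂]` and `[v₀, v₁]`,
where `vₖ = hexVertex k`. -/
lemma mem_complexHexagon_of_im_nonneg {z : ℂ} (h₀ : 0 ≤ z.im) (h₁ : z.im ≤ 1)
    (hright : √3 * z.re + z.im ≤ 2) (hleft : -(√3 * z.re) + z.im ≤ 2) : z ∈ complexHexagon := by
  have hconv : Convex ℝ complexHexagon := convex_convexHull ℝ _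
  have hv (k : ℕ) : hexVertex k ∈ complexHexagon := subset_convexHull ℝ _ (mem_range_self k)
  have hR := hconv (hv 0) (hv 1) (sub_nonneg.2 h₁) h₀ (sub_add_cancel 1 z.im)
  have hL := hconv (hv 3) (hv 2) (sub_nonneg.2 h₁) h₀ (sub_add_cancel 1 z.im)
  have hs : 0 < √3 := by positivity
  set c := (2 - z.im) / √3
  have hc : 0 < c := div_pos (by linarith) hs
  have hsc : √3 * c = 2 - z.im := mul_div_cancel₀ _ hs.ne'
  convert hconv hL hR (a := (c - z.re) / (2 * c)) (b := (c + z.re) / (2 * c))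
    (div_nonneg (by nlinarith) (by positivity)) (div_nonneg (by nlinarith) (by positivity))
    (by field_simp; ring) using 1
  apply Complex.ext <;>
    simp [hexVertex, sixthRoot_sq, sixthRoot_pow_three, -Complex.real_smul, Complex.smul_re,
      Complex.smul_im] <;>
    field_simp
  · linear_combination (2 * z.re) * hsc
  · ring

lemma complexHexagon_eq :
    complexHexagon = {z | ∀ k : Fin 6, inner ℝ (hexNormal k) z ≤ 1} := by
  refine (convexHull_min ?_ ?_).antisymm fun z hz => ?_
  · rw [← range_hexVertex]
    rintro _ ⟨j, rfl⟩ k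
    exact inner_hexNormal_hexVertex_le j k
  · rw [ofPred_forall]
    exact convex_iInter fun k => convex_halfSpace_le (innerₛₗ ℝ (hexNormal k)).isLinear 1
  · have h0 := hz 0; have h1 := hz 1; have h2 := hz 2
    have h3 := hz 3; have h4 := hz 4; have h5 := hz 5
    simp [Complex.inner, hexNormal, sixthRoot_sq, sixthRoot_pow_three, sixthRoot_pow_four,
      sixthRoot_pow_five] at h0 h1 h2 h3 h4 h5
    ring_nf at h0 h1 h2 h3 h4 h5
    simp only [sqrt_three_sq] at h1 h2 h4 h5
    rcases le_total 0 z.im with hy | hy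
    · exact mem_complexHexagon_of_im_nonneg hy (by linarith) (by linarith) (by linarith)
    · rw [← Complex.conj_conj z]
      exact conj_mem_complexHexagon (mem_complexHexagon_of_im_nonneg (z := conj z)
        (by simpa using hy) (by simp; linarith) (by simp; linarith) (by simp; linarith))

lemma closedBall_diff_complexHexagon (r : ℝ) :
    closedBall (0 : ℂ) r \ complexHexagon = ⋃ k : Fin 6, ballCap r 1 (hexNormal k) := by
  ext z
  simp [complexHexagon_eq, ballCap]

lemma volume_closedBall_diff_complexHexagon {r : ℝ} (h₁ : 1 ≤ r) (h₂ : r ≤ 2 / √3) :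
    volume (closedBall (0 : ℂ) r \ complexHexagon) = 6 * ENNReal.ofReal (segmentArea r 1) := by
  have hdisj : Pairwise (Function.onFun Disjoint fun k : Fin 6 => ballCap r 1 (hexNormal k)) := by
    intro j k hjk
    refine disjoint_ballCap ?_
    calc ‖hexNormal j + hexNormal k‖ * r ≤ √3 * (2 / √3) := by
          gcongr
          exact norm_hexNormal_add_le hjk
      _ = 2 * 1 := by field_simp
  have hcap (k : Fin 6) :
      volume (ballCap r 1 (hexNormal k)) = ENNReal.ofReal (segmentArea r 1) := by
    rw [volume_ballCap_congr r 1 ((norm_hexNormal k).trans norm_one.symm),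
      volume_ballCap_one ⟨by linarith, h₁⟩]
  rw [closedBall_diff_complexHexagon, measure_iUnion hdisj fun k => measurableSet_ballCap _ _ _]
  simp [hcap]

lemma image_repr_complexHexagon :
    Complex.orthonormalBasisOneI.repr '' complexHexagon = regularHexagon := by
  rw [complexHexagon, ← range_hexVertex,
    ← Complex.orthonormalBasisOneI.repr.coe_toLinearEquiv, ← LinearEquiv.coe_toLinearMap,
    LinearMap.image_convexHull, ← range_comp, regularHexagon]
  congr! with k
  ext i
  fin_cases i <;> simp [hexVertex_re, hexVertex_im]

lemma volume_closedBall_diff_regularHexagon {r : ℝ} (h₁ : 1 ≤ r) (h₂ : r ≤ 2 / √3) :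
    volume (closedBall (0 : EuclideanSpace ℝ (Fin 2)) r \ regularHexagon) =
      6 * ENNReal.ofReal (segmentArea r 1) := by
  set e := Complex.orthonormalBasisOneI.repr
  have hpre : e ⁻¹' (closedBall 0 r \ regularHexagon) = closedBall 0 r \ complexHexagon := by
    rw [preimage_sdiff, e.preimage_closedBall, map_zero, ← image_repr_complexHexagon,
      preimage_image_eq _ e.injective]
  have hmeas : MeasurableSet (closedBall (0 : EuclideanSpace ℝ (Fin 2)) r \ regularHexagon) :=
    measurableSet_closedBall.diff
      ((finite_range _).isCompact_convexHull (𝕜 := ℝ)).isClosed.measurableSet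
  rw [← e.measurePreserving.measure_preimage hmeas.nullMeasurableSet, hpre,
    volume_closedBall_diff_complexHexagon h₁ h₂]

lemma two_div_sqrt_three_lt_three_halves : 2 / √3 < 3 / 2 := by
  rw [div_lt_iff₀ (by positivity)]
  nlinarith [sqrt_three_sq, sqrt_nonneg 3]

/-- Boundary-cell inequality: for `1 ≤ x ≤ ℓ ≤ 2/√3`,
`-(ℓ²/2)·arccos(x/ℓ) + (x/2)·√(ℓ² - x²) + (3/2 - x)·(ℓ²·arccos(1/ℓ) - √(ℓ² - 1)) ≥ 0`;
moreover, for `1 < ℓ ≤ 2/√3`, the quantity `ℓ²·arccos(1/ℓ) - √(ℓ² - 1)` is positive and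
equals one sixth of the area of `ℓB² ∖ H`, `H` being the regular hexagon of inradius `1`
centered at the origin. -/
theorem boundary_cell_inequality :
    (∀ x ll : ℝ, 1 ≤ x → x ≤ ll → ll ≤ 2 / Real.sqrt 3 →
      0 ≤ -(ll ^ 2 / 2) * Real.arccos (x / ll) + x / 2 * Real.sqrt (ll ^ 2 - x ^ 2) +
        (3 / 2 - x) * (ll ^ 2 * Real.arccos (1 / ll) - Real.sqrt (ll ^ 2 - 1))) ∧
    (∀ ll : ℝ, 1 < ll → ll ≤ 2 / Real.sqrt 3 →
      0 < ll ^ 2 * Real.arccos (1 / ll) - Real.sqrt (ll ^ 2 - 1) ∧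
      ll ^ 2 * Real.arccos (1 / ll) - Real.sqrt (ll ^ 2 - 1) =
        (volume (closedBall (0 : EuclideanSpace ℝ (Fin 2)) ll \ regularHexagon)).toReal / 6) := by
  refine ⟨fun x ll hx hxl hl => ?_, fun ll hl₁ hl₂ => ?_⟩
  · have hS := segmentArea_le_three_sub_two_mul hx hxl
      (hl.trans two_div_sqrt_three_lt_three_halves.le)
    rw [segmentArea_one, segmentArea] at hS
    linarith
  · have hpos : 0 < segmentArea ll 1 := segmentArea_pos ⟨by linarith, hl₁⟩
    rw [← segmentArea_one, volume_closedBall_diff_regularHexagon hl₁.le hl₂, ENNReal.toReal_mul,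
      ENNReal.toReal_ofReal hpos.le]
    exact ⟨hpos, by norm_num⟩
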